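/- arXiv:math/0612632 — 2 statements merged into one kernel-verified Lean document; each statement's English description precedes it below -/
import Mathlib

section
/- Let G be a non-abelian CSA group. Then every finite-index subgroup of G is a non-abelian CSA group; in particular, G has no abelian subgroup of finite index. -/
/-!
Malnormality passes to a subgroup `H`: a maximal abelian subgroup of `H` is the trace on `H` of a
maximal abelian subgroup of `G`.

If a non-abelian CSA group had an abelian subgroup of finite index, a maximal abelian subgroup
`A` containing it would be proper, of finite index, with `A ∩ gAg⁻¹ = 1` for `g ∉ A`; so `G` would
be finite. In a finite CSA group the conjugates of a nontrivial maximal abelian subgroup `A` are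
`[G : A]` in number and meet pairwise trivially, so together they contain `|G| - [G : A] ≥ |G| / 2`
nontrivial elements. If `A ≠ G` some nontrivial `x` lies in no conjugate of `A`; the conjugates of
a maximal abelian subgroup containing `x` contribute another `|G| / 2` nontrivial elements, disjoint
from the first ones, which is too many.
-/

universe u

/-- A group is *CSA* if every maximal abelian subgroup `A` is malnormal:
for every `g ∉ A`, `A ⊓ gAg⁻¹ = ⊥`. -/
def IsCSA (G : Type u) [Group G] : Prop :=
  ∀ A : Subgroup G, Maximal (fun K : Subgroup G => IsMulCommutative K) A →
    ∀ g : G, g ∉ A → A ⊓ Subgroup.map (MulAut.conj g).toMonoidHom A = ⊥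

namespace Subgroup

variable {G : Type u} [Group G]

theorem exists_le_maximal_isMulCommutative (B : Subgroup G) [IsMulCommutative B] :
    ∃ A : Subgroup G, B ≤ A ∧ Maximal (fun K : Subgroup G => IsMulCommutative K) A := by
  refine zorn_le_nonempty₀ {K : Subgroup G | IsMulCommutative K}
    (fun c hc hchain K hK => ⟨sSup c, ?_, fun _ => le_sSup⟩) B ‹_›
  have : Nonempty c := ⟨⟨K, hK⟩⟩
  have : ∀ K : c, IsMulCommutative (K : Subgroup G) := fun K => hc K.2
  rw [Set.mem_ofPred_eq, sSup_eq_iSup']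
  exact isMulCommutative_iSup hchain.directedOn.directed_val

theorem ne_top_of_isMulCommutative {a b : G} (hab : a * b ≠ b * a) (A : Subgroup G)
    [IsMulCommutative A] : A ≠ ⊤ := by
  rintro rfl
  exact hab (setLike_mul_comm (mem_top a) (mem_top b))

theorem two_mul_index_le_card [Finite G] {A : Subgroup G} (hA : A ≠ ⊥) :
    2 * A.index ≤ Nat.card G := by
  rw [← A.card_mul_index]
  exact Nat.mul_le_mul_right _ ((one_lt_card_iff_ne_bot A).2 hA)

def conjugatesUnion (A : Subgroup G) : Set G :=
  {x | ∃ g : G, g⁻¹ * x * g ∈ A}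

end Subgroup

open Subgroup

variable {G : Type u} [Group G]

theorem isCSA_iff : IsCSA G ↔
    ∀ A : Subgroup G, Maximal (fun K : Subgroup G => IsMulCommutative K) A →
      ∀ g a : G, a ∈ A → g * a * g⁻¹ ∈ A → a ≠ 1 → g ∈ A := by
  refine forall₂_congr fun A hA => ⟨fun h g a ha hga ha1 => ?_, fun h g hg => ?_⟩
  · by_contra hg
    have : g * a * g⁻¹ ∈ A ⊓ A.map (MulAut.conj g).toMonoidHom := ⟨hga, mem_map_of_mem _ ha⟩
    rw [h g hg, mem_bot, conj_eq_one_iff] at this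
    exact ha1 this
  · rw [eq_bot_iff]
    rintro _ ⟨hx, a, ha, rfl⟩
    exact (mem_bot).2 (by_contra fun ha1 => hg (h g a ha hx (by simpa using ha1)))

namespace IsCSA

theorem mem_of_conj_mem (hcsa : IsCSA G) {A : Subgroup G}
    (hA : Maximal (fun K : Subgroup G => IsMulCommutative K) A) {g a : G} (ha : a ∈ A)
    (hga : g * a * g⁻¹ ∈ A) (ha1 : a ≠ 1) : g ∈ A :=
  isCSA_iff.1 hcsa A hA g a ha hga ha1

theorem mem_of_commute (hcsa : IsCSA G) {A : Subgroup G}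
    (hA : Maximal (fun K : Subgroup G => IsMulCommutative K) A) {g a : G} (ha : a ∈ A)
    (hga : Commute g a) (ha1 : a ≠ 1) : g ∈ A :=
  hcsa.mem_of_conj_mem hA ha (by rwa [hga.eq, mul_inv_cancel_right]) ha1

protected theorem subgroup (hcsa : IsCSA G) (H : Subgroup G) : IsCSA H := by
  rw [isCSA_iff]
  intro A hA g a ha hga ha1
  have := hA.prop
  obtain ⟨B, hAB, hB⟩ := exists_le_maximal_isMulCommutative (A.map H.subtype)
  have := hB.prop
  have hAB' : A ≤ B.comap H.subtype := map_le_iff_le_comap.1 hAB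
  have hA_eq : A = B.comap H.subtype :=
    le_antisymm hAB' (hA.le_of_ge (comap_injective_isMulCommutative B H.subtype_injective) hAB')
  rw [hA_eq]
  exact hcsa.mem_of_conj_mem hB (hAB (mem_map_of_mem _ ha)) (hAB (mem_map_of_mem _ hga))
    (by simpa using ha1)

theorem inv_mul_mem_of_conj_eq (hcsa : IsCSA G) {A : Subgroup G}
    (hA : Maximal (fun K : Subgroup G => IsMulCommutative K) A) {g₁ g₂ a₁ a₂ : G}
    (ha₁ : a₁ ∈ A) (ha₂ : a₂ ∈ A) (ha₁1 : a₁ ≠ 1) (h : g₁ * a₁ * g₁⁻¹ = g₂ * a₂ * g₂⁻¹) :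
    g₂⁻¹ * g₁ ∈ A :=
  hcsa.mem_of_conj_mem hA ha₁ (by
    rwa [show g₂⁻¹ * g₁ * a₁ * (g₂⁻¹ * g₁)⁻¹ = g₂⁻¹ * (g₁ * a₁ * g₁⁻¹) * g₂ by group, h,
      show g₂⁻¹ * (g₂ * a₂ * g₂⁻¹) * g₂ = a₂ by group]) ha₁1

theorem ncard_conjugatesUnion_diff_one [Finite G] (hcsa : IsCSA G) {A : Subgroup G}
    (hA : Maximal (fun K : Subgroup G => IsMulCommutative K) A) :
    (A.conjugatesUnion \ {1}).ncard = Nat.card G - A.index := by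
  let f : (G ⧸ A) × ↥((A : Set G) \ {1}) → G := fun p => p.1.out * p.2 * p.1.out⁻¹
  have hf : Function.Injective f := by
    rintro ⟨q₁, a₁, ha₁, ha₁1⟩ ⟨q₂, a₂, ha₂, _⟩ h
    have hq : q₁ = q₂ := by
      rw [← QuotientGroup.out_eq' q₁, ← QuotientGroup.out_eq' q₂, QuotientGroup.eq]
      exact inv_mem_iff.1 (by simpa using hcsa.inv_mul_mem_of_conj_eq hA ha₁ ha₂ ha₁1 h)
    subst hq
    simpa [f, Subtype.ext_iff] using h
  have hrange : Set.range f = A.conjugatesUnion \ {1} := by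
    ext x
    constructor
    · rintro ⟨⟨q, a, ha, ha1⟩, rfl⟩
      exact ⟨⟨q.out, by simpa [f, mul_assoc] using ha⟩, by simpa [f] using ha1⟩
    · rintro ⟨⟨g, hg⟩, hx1⟩
      obtain ⟨k, hk⟩ := QuotientGroup.mk_out_eq_mul A g
      refine ⟨⟨(g : G ⧸ A), (g * k)⁻¹ * x * (g * k), ?_, ?_⟩, ?_⟩
      · simpa [mul_assoc] using A.mul_mem (A.mul_mem (A.inv_mem k.2) hg) k.2
      · simpa using (conj_eq_one_iff (a := (g * k)⁻¹) (b := x)).not.2 hx1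
      · simp [f, hk, mul_assoc]
  rw [← hrange, Set.ncard_range_of_injective hf, Nat.card_prod, Nat.card_coe_set_eq,
    Set.ncard_sdiff_singleton_of_mem A.one_mem, ← Nat.card_coe_set_eq, SetLike.coe_sort_coe,
    ← A.card_mul_index, Nat.mul_sub_one, mul_comm]
  rfl

theorem conjugatesUnion_ne_univ [Finite G] (hcsa : IsCSA G) {A : Subgroup G}
    (hA : Maximal (fun K : Subgroup G => IsMulCommutative K) A) (hA_top : A ≠ ⊤)
    (hA_bot : A ≠ ⊥) : A.conjugatesUnion ≠ Set.univ := by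
  intro h
  have hcard := hcsa.ncard_conjugatesUnion_diff_one hA
  rw [h, Set.ncard_sdiff_singleton_of_mem (Set.mem_univ 1), Set.ncard_univ] at hcard
  have := A.index_ne_zero_of_finite
  have := two_mul_index_le_card hA_bot
  exact hA_top (index_eq_one.1 (by omega))

theorem disjoint_conjugatesUnion (hcsa : IsCSA G) {A C : Subgroup G}
    (hA : Maximal (fun K : Subgroup G => IsMulCommutative K) A)
    [IsMulCommutative C] {x : G} (hxC : x ∈ C) (hxA : x ∉ A.conjugatesUnion) :
    Disjoint (A.conjugatesUnion \ {1}) (C.conjugatesUnion \ {1}) := by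
  rw [Set.disjoint_left]
  rintro z ⟨⟨g, hzA⟩, hz1⟩ ⟨⟨h, hzC⟩, -⟩
  -- with `k = g⁻¹h`, `kxk⁻¹` commutes with the nontrivial element `g⁻¹zg = k(h⁻¹zh)k⁻¹` of `A`
  set k := g⁻¹ * h
  have hconj : g⁻¹ * z * g = k * (h⁻¹ * z * h) * k⁻¹ := by simp only [k]; group
  have hcomm : Commute (k * x * k⁻¹) (g⁻¹ * z * g) := by
    rw [hconj, Commute.conj_iff]
    exact setLike_mul_comm hxC hzC
  refine hxA ⟨k⁻¹, ?_⟩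
  rw [inv_inv]
  exact hcsa.mem_of_commute hA hzA hcomm (by simpa using (conj_eq_one_iff (a := g⁻¹)).not.2 hz1)

theorem mul_comm_of_finite [Finite G] (hcsa : IsCSA G) (a b : G) : a * b = b * a := by
  by_contra hab
  obtain ⟨A, hA_le, hA⟩ := exists_le_maximal_isMulCommutative (zpowers a)
  have := hA.prop
  have hA_top : A ≠ ⊤ := ne_top_of_isMulCommutative hab A
  have haA : a ∈ A := hA_le (mem_zpowers a)
  have ha1 : a ≠ 1 := by rintro rfl; simp at hab
  have hA_bot : A ≠ ⊥ := fun h => ha1 (by simpa [h] using haA)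
  obtain ⟨x, hxA⟩ :=
    (Set.ne_univ_iff_exists_notMem _).1 (hcsa.conjugatesUnion_ne_univ hA hA_top hA_bot)
  have hx1 : x ≠ 1 := by rintro rfl; exact hxA ⟨1, by simp⟩
  obtain ⟨C, hC_le, hC⟩ := exists_le_maximal_isMulCommutative (zpowers x)
  have hxC : x ∈ C := hC_le (mem_zpowers x)
  have := hC.prop
  have hC_bot : C ≠ ⊥ := fun h => hx1 (by simpa [h] using hxC)
  have hunion : (A.conjugatesUnion \ {1} ∪ C.conjugatesUnion \ {1}).ncard ≤
      (Set.univ \ {1} : Set G).ncard :=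
    Set.ncard_le_ncard (Set.union_subset (Set.sdiff_subset_sdiff_left (Set.subset_univ _))
      (Set.sdiff_subset_sdiff_left (Set.subset_univ _)))
  rw [Set.ncard_union_eq (hcsa.disjoint_conjugatesUnion hA hxC hxA),
    hcsa.ncard_conjugatesUnion_diff_one hA, hcsa.ncard_conjugatesUnion_diff_one hC,
    Set.ncard_sdiff_singleton_of_mem (Set.mem_univ 1), Set.ncard_univ] at hunion
  have := two_mul_index_le_card hA_bot
  have := two_mul_index_le_card hC_bot
  have : 0 < Nat.card G := Nat.card_pos
  omega

theorem finite_of_maximal_finiteIndex (hcsa : IsCSA G) {A : Subgroup G}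
    (hA : Maximal (fun K : Subgroup G => IsMulCommutative K) A) (hA_top : A ≠ ⊤)
    [A.FiniteIndex] : Finite G := by
  obtain ⟨g, hg⟩ : ∃ g, g ∉ A := by
    by_contra! h
    exact hA_top ((eq_top_iff' A).2 h)
  have : (A.map (MulAut.conj g).toMonoidHom).FiniteIndex :=
    ⟨(index_map_equiv A (MulAut.conj g)).symm ▸ FiniteIndex.index_ne_zero⟩
  have hbot : (⊥ : Subgroup G).FiniteIndex := hcsa A hA g hg ▸ inferInstance
  exact Nat.finite_of_card_ne_zero (index_bot (G := G) ▸ hbot.index_ne_zero)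

theorem not_isMulCommutative_of_finiteIndex (hcsa : IsCSA G) {a b : G} (hab : a * b ≠ b * a)
    (B : Subgroup G) [B.FiniteIndex] : ¬IsMulCommutative B := by
  intro hB
  obtain ⟨A, hBA, hA⟩ := exists_le_maximal_isMulCommutative B
  have := finiteIndex_of_le hBA
  have := hA.prop
  have := hcsa.finite_of_maximal_finiteIndex hA (ne_top_of_isMulCommutative hab A)
  exact hab (hcsa.mul_comm_of_finite a b)

end IsCSA

/-- Every finite-index subgroup of a non-abelian CSA group is a non-abelian
CSA group; in particular a non-abelian CSA group has no abelian subgroup of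
finite index. -/
theorem stmt_4 (G : Type u) [Group G] (hcsa : IsCSA G)
    (hna : ∃ a b : G, a * b ≠ b * a)
    (H : Subgroup G) (hH : H.FiniteIndex) :
    IsCSA H ∧ ∃ a b : H, a * b ≠ b * a := by
  refine ⟨hcsa.subgroup H, ?_⟩
  obtain ⟨a, b, hab⟩ := hna
  by_contra! h
  exact hcsa.not_isMulCommutative_of_finiteIndex hab H (isMulCommutative_iff.2 h)
end

section
/- Non-abelian CSA groups are strongly indecomposable: if G is a non-abelian CSA group, then every finite-index subgroup of G is indecomposable. -/
/-!
In a CSA group commutation is transitive on nontrivial elements, and this passes to subgroups.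
If a subgroup `H ≅ A × B` had both factors nontrivial, then fixing `b₀ ≠ 1` in `B`, every
element of `A` commutes with `b₀`, hence all of `A` commutes with itself; likewise for `B`, so
`H` is abelian. It remains to see that a CSA group with an abelian subgroup `H` of finite index
is abelian. If `G` is infinite, the maximal abelian subgroup `M ⊇ H` meets each of its conjugates
in a subgroup of finite index, hence nontrivially, so `M = G`. If `G` is finite, every Sylow
subgroup `P` lies in the maximal abelian subgroup through a nontrivial central element of `P`,
and malnormality gives `N(P) ≤ C(P)`. Burnside's transfer `G → P` then has abelian image and
kernel of order prime to `p`, so it kills every commutator, whose order is thus prime to every `p`.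
-/

universe u

/-- A group is *indecomposable* if whenever it is isomorphic to a direct
product `A × B` of groups, one of `A` or `B` is trivial. -/
def Indecomposable (G : Type u) [Group G] : Prop :=
  ∀ (A B : Type u) [Group A] [Group B], Nonempty (G ≃* A × B) →
    Subsingleton A ∨ Subsingleton B

open Subgroup
open scoped commutatorElement

def IsCommTransitive (G : Type*) [Group G] : Prop :=
  ∀ ⦃x y z : G⦄, y ≠ 1 → Commute x y → Commute y z → Commute x z

namespace IsCommTransitive

variable {G H A B : Type*} [Group G] [Group H] [Group A] [Group B]

lemma of_injective (hG : IsCommTransitive G) {f : H →* G} (hf : Function.Injective f) :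
    IsCommTransitive H := fun _ _ _ hy hxy hyz =>
  (hG ((map_ne_one_iff f hf).2 hy) (hxy.map f) (hyz.map f)).of_map hf

lemma commute_of_prod [Nontrivial A] [Nontrivial B] (h : IsCommTransitive (A × B))
    (p q : A × B) : Commute p q := by
  obtain ⟨a₀, ha₀⟩ := exists_ne (1 : A)
  obtain ⟨b₀, hb₀⟩ := exists_ne (1 : B)
  have hA (a a' : A) : Commute a a' :=
    (Prod.commute_iff.1 <| h (x := (a, 1)) (y := (1, b₀)) (z := (a', 1)) (by simp [hb₀])
      (.prod (.one_right a) (.one_left b₀)) (.prod (.one_left a') (.one_right b₀))).1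
  have hB (b b' : B) : Commute b b' :=
    (Prod.commute_iff.1 <| h (x := (1, b)) (y := (a₀, 1)) (z := (1, b')) (by simp [ha₀])
      (.prod (.one_left a₀) (.one_right b)) (.prod (.one_right a₀) (.one_left b'))).2
  exact .prod (hA _ _) (hB _ _)

end IsCommTransitive

section MaximalCommutative

variable {G : Type u} [Group G]

lemma Subgroup.exists_maximal_isMulCommutative_ge (K : Subgroup G) [IsMulCommutative K] :
    ∃ M : Subgroup G, K ≤ M ∧ Maximal (fun K : Subgroup G => IsMulCommutative K) M := by
  refine zorn_le_nonempty₀ _ (fun c hc hchain L hL => ?_) K ‹_›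
  have : Nonempty c := ⟨⟨L, hL⟩⟩
  have (M : c) : IsMulCommutative (M : Subgroup G) := hc M.2
  exact ⟨⨆ M : c, (M : Subgroup G), isMulCommutative_iSup hchain.directedOn.directed_val,
    fun M hM => le_iSup (fun M : c => (M : Subgroup G)) ⟨M, hM⟩⟩

namespace IsCSA

variable (hcsa : IsCSA G) {M : Subgroup G}
  (hM : Maximal (fun K : Subgroup G => IsMulCommutative K) M)
include hcsa hM

lemma eq_one_of_conj_mem {g y : G} (hg : g ∉ M) (hy : y ∈ M) (hgy : g * y * g⁻¹ ∈ M) :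
    y = 1 := by
  have hmem : g * y * g⁻¹ ∈ M ⊓ M.map (MulAut.conj g).toMonoidHom := ⟨hgy, y, hy, rfl⟩
  rwa [hcsa M hM g hg, mem_bot, conj_eq_one_iff] at hmem

lemma mem_of_commute_s6 {g y : G} (hy : y ≠ 1) (hyM : y ∈ M) (h : Commute g y) : g ∈ M := by
  by_contra hg
  exact hy (hcsa.eq_one_of_conj_mem hM hg hyM (by rwa [h.eq, mul_inv_cancel_right]))

lemma normalizer_le {K : Subgroup G} (hKM : K ≤ M) (hK : K ≠ ⊥) :
    normalizer (K : Set G) ≤ M := by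
  intro g hg
  by_contra hgM
  obtain ⟨⟨k, hk⟩, hk1⟩ := ne_bot_iff_exists_ne_one.1 hK
  exact hk1 <| Subtype.ext <|
    hcsa.eq_one_of_conj_mem hM hgM (hKM hk) (hKM ((mem_normalizer_iff.1 hg k).1 hk))

lemma eq_top_of_finiteIndex [Infinite G] [M.FiniteIndex] : M = ⊤ := by
  refine eq_top_iff.2 fun g _ => by_contra fun hg => ?_
  have : (M.map (MulAut.conj g).toMonoidHom).FiniteIndex :=
    ⟨(index_map_equiv M (MulAut.conj g)).trans_ne FiniteIndex.index_ne_zero⟩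
  have hfin := FiniteIndex.index_ne_zero (H := M ⊓ M.map (MulAut.conj g).toMonoidHom)
  rw [hcsa M hM g hg, index_bot, Nat.card_eq_zero_of_infinite] at hfin
  exact hfin rfl

end IsCSA

namespace IsCSA

variable (hcsa : IsCSA G)
include hcsa

lemma isCommTransitive : IsCommTransitive G := by
  intro x y z hy hxy hyz
  obtain ⟨M, hyM, hM⟩ := (zpowers y).exists_maximal_isMulCommutative_ge
  have := hM.prop
  have hy' := hyM (mem_zpowers y)
  exact setLike_mul_comm (s := M) (hcsa.mem_of_commute_s6 hM hy hy' hxy)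
    (hcsa.mem_of_commute_s6 hM hy hy' hyz.symm)

lemma normalizer_le_centralizer {K : Subgroup G} [Nontrivial (center K)] :
    normalizer (K : Set G) ≤ centralizer (K : Set G) := by
  obtain ⟨⟨⟨z, hzK⟩, hz⟩, hz1⟩ := exists_ne (1 : center K)
  have hz1 : z ≠ 1 := fun h => hz1 (Subtype.ext (Subtype.ext h))
  obtain ⟨M, hzM, hM⟩ := (zpowers z).exists_maximal_isMulCommutative_ge
  have := hM.prop
  have hKM : K ≤ M := fun k hk => hcsa.mem_of_commute_s6 hM hz1 (hzM (mem_zpowers z))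
    (congrArg Subtype.val (mem_center_iff.1 hz ⟨k, hk⟩))
  refine (hcsa.normalizer_le hM hKM ?_).trans fun g hg => mem_centralizer_iff.2 fun k hk =>
    setLike_mul_comm (s := M) (hKM hk) hg
  exact ne_bot_iff_exists_ne_one.2 ⟨⟨z, hzK⟩, fun h => hz1 (congrArg Subtype.val h)⟩

lemma commute_of_finite [Finite G] (a b : G) : Commute a b := by
  by_contra hab
  have hc : ⁅a, b⁆ ≠ 1 := mt commutatorElement_eq_one_iff_commute.1 hab
  obtain ⟨p, hp, hpc⟩ := Nat.exists_prime_and_dvd (mt orderOf_eq_one_iff.1 hc)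
  have : Fact p.Prime := ⟨hp⟩
  obtain ⟨P⟩ : Nonempty (Sylow p G) := inferInstance
  have : Nontrivial P := (nontrivial_iff_ne_bot _).2 <|
    P.ne_bot_of_dvd_card (hpc.trans (orderOf_dvd_natCard _))
  have : Nontrivial (center P) := IsPGroup.center_nontrivial P.2
  have hN := hcsa.normalizer_le_centralizer (K := P)
  have hker : ⁅a, b⁆ ∈ (MonoidHom.transferSylow P hN).ker := by
    rw [MonoidHom.mem_ker, map_commutatorElement, commutatorElement_eq_one_iff_commute]
    exact Subtype.ext (hN (le_normalizer (_ : P).2) _ (_ : P).2)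
  exact MonoidHom.not_dvd_card_ker_transferSylow P hN
    (hpc.trans (Subgroup.orderOf_dvd_natCard _ hker))

lemma commute_of_finiteIndex (H : Subgroup G) [H.FiniteIndex] [IsMulCommutative H] (a b : G) :
    Commute a b := by
  cases finite_or_infinite G
  · exact hcsa.commute_of_finite a b
  · obtain ⟨M, hHM, hM⟩ := H.exists_maximal_isMulCommutative_ge
    have := hM.prop
    have : M.FiniteIndex := finiteIndex_of_le hHM
    have hM_top := hcsa.eq_top_of_finiteIndex hM
    exact setLike_mul_comm (s := M) (hM_top ▸ mem_top a) (hM_top ▸ mem_top b)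

end IsCSA

end MaximalCommutative

/-- Non-abelian CSA groups are strongly indecomposable: every finite-index
subgroup is indecomposable. -/
theorem stmt_6 (G : Type u) [Group G] (hcsa : IsCSA G)
    (hna : ∃ a b : G, a * b ≠ b * a)
    (H : Subgroup G) (hH : H.FiniteIndex) :
    Indecomposable H := by
  intro A B _ _ ⟨e⟩
  by_contra hAB
  rw [not_or, not_subsingleton_iff_nontrivial, not_subsingleton_iff_nontrivial] at hAB
  obtain ⟨_, _⟩ := hAB
  have hprod : IsCommTransitive (A × B) :=
    hcsa.isCommTransitive.of_injective (f := H.subtype.comp e.symm.toMonoidHom)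
      (H.subtype_injective.comp e.symm.injective)
  have : IsMulCommutative H := .of_comm fun x y =>
    ((hprod.commute_of_prod (e x) (e y)).of_map e.injective).eq
  obtain ⟨a, b, hab⟩ := hna
  exact hab (hcsa.commute_of_finiteIndex H a b).eq
end
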